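/- arXiv:math/0605321 — 5 statements merged into one kernel-verified Lean document; each statement's English description precedes it below -/
import Mathlib

section
/- Let n ≥ 3 and k be integers with 3 ≤ k ≤ n, and let h₁, …, hₙ be real numbers with h₁ + h₂ + ⋯ + hₙ = K. Then f(h₁,…,hₙ) ≤ ((n−2)/(2(n−1))) · K², where f(h₁,…,hₙ) = Σ_{1≤i<j≤n} hᵢhⱼ − (1/(k−1)) · h₁ · Σ_{i=2}^{k} hᵢ. -/
/-!
Since `Σ_{i<j} hᵢhⱼ = (K² − Σ hᵢ²)/2`, the claim is `K² ≤ (n−1)(Σ hᵢ² + 2h₁S/(k−1))` with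
`S = h₂ + ⋯ + h_k`. Adding `h₁/(k−1)` to each of `h₂, …, h_k` turns `h₂, …, hₙ` into `n−1`
numbers with sum `K` and sum of squares
`Σ_{i≥2} hᵢ² + 2h₁S/(k−1) + h₁²/(k−1) ≤ Σ hᵢ² + 2h₁S/(k−1)`, so Cauchy–Schwarz concludes.
-/

open Finset

/-- The quadratic form `f(h₁,…,hₙ) = Σ_{1≤i<j≤n} hᵢhⱼ − (1/(k−1)) · h₁ · Σ_{i=2}^{k} hᵢ`
(indices written 0-based: `h₁ = h 0`, and `Σ_{i=2}^{k}` becomes the sum over `1 ≤ i < k`). -/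
noncomputable def chenF (n k : ℕ) (hn : 3 ≤ n) (h : Fin n → ℝ) : ℝ :=
  (∑ i : Fin n, ∑ j : Fin n, if i < j then h i * h j else 0)
    - (1 / ((k : ℝ) - 1)) * h ⟨0, by omega⟩ *
      (∑ i : Fin n, if 1 ≤ (i : ℕ) ∧ (i : ℕ) < k then h i else 0)

theorem two_mul_sum_sum_ite_lt {R ι : Type*} [CommRing R] [Fintype ι] [LinearOrder ι]
    (f : ι → R) :
    2 * ∑ i, ∑ j, (if i < j then f i * f j else 0) = (∑ i, f i) ^ 2 - ∑ i, f i ^ 2 := by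
  have hsplit : ∀ i j, f i * f j = (if i < j then f i * f j else 0)
      + (if j < i then f j * f i else 0) + (if i = j then f i ^ 2 else 0) := by
    intro i j
    rcases lt_trichotomy i j with hij | rfl | hij
    · simp [hij, hij.not_gt, hij.ne]
    · simp [sq]
    · simp [hij, hij.not_gt, hij.ne', mul_comm]
  rw [sq, sum_mul_sum, sum_congr rfl fun i _ => sum_congr rfl fun j _ => hsplit i j]
  simp only [sum_add_distrib]
  rw [sum_comm (f := fun i j => if j < i then f j * f i else 0)]
  simp only [sum_ite_eq, mem_univ, if_true]
  ring

/-- Cauchy–Schwarz on `s` after spreading `a` evenly over `t`. -/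
theorem sq_add_sum_le_card_mul {ι : Type*} (s t : Finset ι) (hts : t ⊆ s) (ht : t.Nonempty)
    (a : ℝ) (f : ι → ℝ) :
    (a + ∑ i ∈ s, f i) ^ 2 ≤ #s * (∑ i ∈ s, f i ^ 2 + (2 * a * ∑ i ∈ t, f i + a ^ 2) / #t) := by
  classical
  have hc : (#t : ℝ) ≠ 0 := by exact_mod_cast ht.card_pos.ne'
  set g : ι → ℝ := fun i => f i + if i ∈ t then a / #t else 0
  have hg : ∑ i ∈ s, g i = a + ∑ i ∈ s, f i := by
    simp only [g, sum_add_distrib, sum_ite_mem, inter_eq_right.2 hts, sum_const, nsmul_eq_mul]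
    field_simp
    ring
  have hg_sq : ∀ i, g i ^ 2 = f i ^ 2 + if i ∈ t then 2 * (a / #t) * f i + (a / #t) ^ 2 else 0 := by
    intro i
    by_cases hi : i ∈ t <;> simp only [g, hi, if_true, if_false] <;> ring
  have hg2 : ∑ i ∈ s, g i ^ 2 = ∑ i ∈ s, f i ^ 2 + (2 * a * ∑ i ∈ t, f i + a ^ 2) / #t := by
    simp only [hg_sq, sum_add_distrib, sum_ite_mem, inter_eq_right.2 hts, sum_const, nsmul_eq_mul,
      ← mul_sum]
    field_simp
  rw [← hg, ← hg2]
  exact sq_sum_le_card_mul_sum_sq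

theorem stmt_0 (n k : ℕ) (hn : 3 ≤ n) (hk : 3 ≤ k) (hkn : k ≤ n)
    (K : ℝ) (h : Fin n → ℝ) (hsum : ∑ i, h i = K) :
    chenF n k hn h ≤ ((n : ℝ) - 2) / (2 * ((n : ℝ) - 1)) * K ^ 2 := by
  obtain ⟨m, rfl⟩ : ∃ m, n = m + 1 := ⟨n - 1, by omega⟩
  set t : Finset (Fin m) := {i | (i : ℕ) < k - 1}
  have ht : #t = k - 1 := by simp only [t, Fin.card_filter_val_lt]; omega
  have hS : (∑ i : Fin (m + 1), if 1 ≤ (i : ℕ) ∧ (i : ℕ) < k then h i else 0)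
      = ∑ i ∈ t, h i.succ := by
    rw [Fin.sum_univ_succ, sum_filter]
    refine (zero_add _).trans (sum_congr rfl fun i _ => if_congr ?_ rfl rfl)
    simp only [Fin.val_succ]
    omega
  have hF : 2 * chenF (m + 1) k hn h
      = K ^ 2 - (h 0 ^ 2 + ∑ i : Fin m, h i.succ ^ 2) - 2 * h 0 * (∑ i ∈ t, h i.succ) / #t := by
    rw [chenF, mul_sub, two_mul_sum_sum_ite_lt, hS, hsum, Fin.sum_univ_succ, ht, Fin.mk_zero]
    push_cast [Nat.cast_sub (by omega : 1 ≤ k)]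
    ring
  have hCS := sq_add_sum_le_card_mul univ t (subset_univ t) (card_pos.1 (by omega))
    (h 0) (fun i => h i.succ)
  rw [← Fin.sum_univ_succ, hsum, card_univ, Fintype.card_fin, add_div,
    add_comm (2 * h 0 * _ / _)] at hCS
  have hm : (0 : ℝ) < m := by exact_mod_cast (by omega : 0 < m)
  have hc : (1 : ℝ) ≤ #t := by rw [ht]; exact_mod_cast (by omega : 1 ≤ k - 1)
  have hA := mul_le_mul_of_nonneg_left (div_le_self (sq_nonneg (h 0)) hc) hm.le
  push_cast
  rw [add_sub_cancel_right, div_mul_eq_mul_div, le_div_iff₀ (by positivity)]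
  linear_combination (m : ℝ) * hF + hCS + hA
end

section
/- Let n ≥ 3 and k be integers with 3 ≤ k ≤ n, and let X₁, …, Xₙ be real numbers with X₁ + X₂ + ⋯ + Xₙ = 0. Then 2·f(X₁,…,Xₙ) = −(1/(k−1)) · [ Σ_{j=2}^{k} (X₁ + Xⱼ)² + (k−2) · Σ_{j=2}^{k} Xⱼ² + (k−1) · Σ_{i=k+1}^{n} Xᵢ² ]. -/
open Finset

theorem stmt_2 (n k : ℕ) (hn : 3 ≤ n) (hk : 3 ≤ k) (hkn : k ≤ n)
    (X : Fin n → ℝ) (hsum : ∑ i, X i = 0) :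
    2 * chenF n k hn X =
      -(1 / ((k : ℝ) - 1)) *
        ((∑ j : Fin n, if 1 ≤ (j : ℕ) ∧ (j : ℕ) < k then (X ⟨0, by omega⟩ + X j) ^ 2 else 0)
          + ((k : ℝ) - 2) * (∑ j : Fin n, if 1 ≤ (j : ℕ) ∧ (j : ℕ) < k then X j ^ 2 else 0)
          + ((k : ℝ) - 1) * (∑ i : Fin n, if k ≤ (i : ℕ) then X i ^ 2 else 0)) := by
  unfold chenF

  set x0 : ℝ := X ⟨0, by omega⟩ with hx0
  set S1 : ℝ := ∑ i : Fin n, if 1 ≤ (i : ℕ) ∧ (i : ℕ) < k then X i else 0 with hS1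
  set Q1 : ℝ := ∑ j : Fin n, if 1 ≤ (j : ℕ) ∧ (j : ℕ) < k then X j ^ 2 else 0 with hQ1
  set Q2 : ℝ := ∑ i : Fin n, if k ≤ (i : ℕ) then X i ^ 2 else 0 with hQ2
  have hk1 : (k : ℝ) - 1 ≠ 0 := by
    have : (3:ℝ) ≤ (k:ℝ) := by exact_mod_cast hk
    linarith
  -- count lemma
  have hcard : (∑ j : Fin n, if 1 ≤ (j : ℕ) ∧ (j : ℕ) < k then (1:ℝ) else 0) = (k:ℝ) - 1 := by
    have h1 : (∑ j : Fin n, if 1 ≤ (j : ℕ) ∧ (j : ℕ) < k then (1:ℝ) else 0)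
        = ∑ j ∈ range n, if 1 ≤ j ∧ j < k then (1:ℝ) else 0 :=
      Fin.sum_univ_eq_sum_range (fun j => if 1 ≤ j ∧ j < k then (1:ℝ) else 0) n
    rw [h1, Finset.sum_ite, Finset.sum_const, Finset.sum_const]
    have h2 : (range n).filter (fun j => 1 ≤ j ∧ j < k) = Finset.Ico 1 k := by
      ext a; simp [Finset.mem_Ico, Finset.mem_range]; omega
    rw [h2, Nat.card_Ico]
    have : ((k - 1 : ℕ) : ℝ) = (k:ℝ) - 1 := by
      have : 1 ≤ k := by omega
      push_cast [this]; ring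
    simp [this]
  -- key: 2 * double sum
  have key : 2 * (∑ i : Fin n, ∑ j : Fin n, if i < j then X i * X j else 0)
      = (∑ i, X i) ^ 2 - ∑ i, X i ^ 2 := by
    have expand : (∑ i, X i) ^ 2 = ∑ i : Fin n, ∑ j : Fin n, X i * X j := by
      rw [sq, Finset.sum_mul_sum]
    have split : ∀ i j : Fin n, X i * X j =
        (if i < j then X i * X j else 0) + (if j < i then X i * X j else 0)
        + (if i = j then X i * X j else 0) := by
      intro i j
      rcases lt_trichotomy i j with h | h | h
      · simp [h, not_lt.2 h.le, h.ne, h.ne']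
      · simp [h, lt_irrefl]
      · simp [h, not_lt.2 h.le, h.ne, h.ne']
    have e1 : (∑ i : Fin n, ∑ j : Fin n, X i * X j)
        = (∑ i : Fin n, ∑ j : Fin n, if i < j then X i * X j else 0)
          + (∑ i : Fin n, ∑ j : Fin n, if j < i then X i * X j else 0)
          + (∑ i : Fin n, ∑ j : Fin n, if i = j then X i * X j else 0) := by
      rw [← Finset.sum_add_distrib, ← Finset.sum_add_distrib]
      refine Finset.sum_congr rfl fun i _ => ?_
      rw [← Finset.sum_add_distrib, ← Finset.sum_add_distrib]
      exact Finset.sum_congr rfl fun j _ => split i j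
    have e2 : (∑ i : Fin n, ∑ j : Fin n, if j < i then X i * X j else 0)
        = (∑ i : Fin n, ∑ j : Fin n, if i < j then X i * X j else 0) := by
      rw [Finset.sum_comm]
      refine Finset.sum_congr rfl fun i _ => Finset.sum_congr rfl fun j _ => ?_
      rw [mul_comm]
    have e3 : (∑ i : Fin n, ∑ j : Fin n, if i = j then X i * X j else 0) = ∑ i, X i ^ 2 := by
      refine Finset.sum_congr rfl fun i _ => ?_
      rw [Finset.sum_ite_eq (Finset.univ) i (fun j => X i * X j)]
      simp [sq]
    rw [expand, e1, e2, e3]; ring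
  -- sum of squares decomposition
  have sqsplit : (∑ i, X i ^ 2) = x0 ^ 2 + Q1 + Q2 := by
    have pt : ∀ i : Fin n, X i ^ 2 =
        (if (i : ℕ) = 0 then X i ^ 2 else 0) + (if 1 ≤ (i : ℕ) ∧ (i : ℕ) < k then X i ^ 2 else 0)
        + (if k ≤ (i : ℕ) then X i ^ 2 else 0) := by
      intro i
      split_ifs <;> (try ring) <;> (exfalso; omega)
    rw [Finset.sum_congr rfl fun i _ => pt i, Finset.sum_add_distrib, Finset.sum_add_distrib]
    have h0 : (∑ i : Fin n, if (i : ℕ) = 0 then X i ^ 2 else 0) = x0 ^ 2 := by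
      rw [Finset.sum_eq_single (⟨0, by omega⟩ : Fin n)]
      · simp [hx0]
      · intro b _ hb
        have : (b : ℕ) ≠ 0 := fun h => hb (Fin.ext h)
        simp [this]
      · simp
    rw [h0, hQ1, hQ2]
  -- expand QA
  have qa : (∑ j : Fin n, if 1 ≤ (j : ℕ) ∧ (j : ℕ) < k then (x0 + X j) ^ 2 else 0)
      = ((k:ℝ) - 1) * x0 ^ 2 + 2 * x0 * S1 + Q1 := by
    have pt : ∀ j : Fin n, (if 1 ≤ (j : ℕ) ∧ (j : ℕ) < k then (x0 + X j) ^ 2 else 0)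
        = x0 ^ 2 * (if 1 ≤ (j : ℕ) ∧ (j : ℕ) < k then (1:ℝ) else 0)
          + 2 * x0 * (if 1 ≤ (j : ℕ) ∧ (j : ℕ) < k then X j else 0)
          + (if 1 ≤ (j : ℕ) ∧ (j : ℕ) < k then X j ^ 2 else 0) := by
      intro j; split_ifs <;> ring
    rw [Finset.sum_congr rfl fun j _ => pt j, Finset.sum_add_distrib, Finset.sum_add_distrib,
      ← Finset.mul_sum, ← Finset.mul_sum, hcard, ← hS1, ← hQ1]
    ring
  rw [qa]
  rw [hsum] at key
  have keysq : 2 * (∑ i : Fin n, ∑ j : Fin n, if i < j then X i * X j else 0)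
      = -(x0 ^ 2 + Q1 + Q2) := by rw [key, sqsplit]; ring
  field_simp
  nlinarith [keysq]
end

section
/- Let n ≥ 3 and k be integers with 3 ≤ k ≤ n, and let X₁, …, Xₙ be real numbers with X₁ + X₂ + ⋯ + Xₙ = 0 and (X₁,…,Xₙ) ≠ (0,…,0). Then f(X₁,…,Xₙ) < 0; that is, the restriction of the quadratic form f to the hyperplane { X : Σᵢ Xᵢ = 0 } is negative definite. -/
open Finset

theorem stmt_3 (n k : ℕ) (hn : 3 ≤ n) (hk : 3 ≤ k) (hkn : k ≤ n)
    (X : Fin n → ℝ) (hsum : ∑ i, X i = 0) (hX : X ≠ 0) :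
    chenF n k hn X < 0 := by
  set Q : ℝ := ∑ i : Fin n, X i ^ 2 with hQdef
  set s : Finset (Fin n) := Finset.univ.filter (fun i : Fin n => 1 ≤ (i : ℕ) ∧ (i : ℕ) < k)
    with hsdef
  set T : ℝ := ∑ i ∈ s, X i with hTdef
  set P : ℝ := ∑ i ∈ s, X i ^ 2 with hPdef
  set a : ℝ := X ⟨0, by omega⟩ with hadef
  set kr : ℝ := (k : ℝ) - 1 with hkrdef
  have hkr2 : (2 : ℝ) ≤ kr := by
    have : (3 : ℝ) ≤ (k : ℝ) := by exact_mod_cast hk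
    simp [hkrdef]; linarith
  have hkr0 : (0 : ℝ) < kr := by linarith
  -- off-diagonal sum equals -Q/2
  have hA : (∑ i : Fin n, ∑ j : Fin n, if i < j then X i * X j else 0) = -Q / 2 := by
    have expand : ∀ i j : Fin n, X i * X j =
        (if i < j then X i * X j else 0) + (if i = j then X i * X j else 0)
          + (if j < i then X i * X j else 0) := by
      intro i j
      rcases lt_trichotomy i j with h | h | h
      · simp [h, h.ne, asymm h]
      · simp [h, lt_irrefl]
      · simp [h, h.ne', asymm h]
    have hsq : (∑ i : Fin n, X i) ^ 2 = ∑ i : Fin n, ∑ j : Fin n, X i * X j := by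
      rw [sq, Finset.sum_mul_sum]
    have hdiag : (∑ i : Fin n, ∑ j : Fin n, if i = j then X i * X j else 0) = Q := by
      simp [hQdef, sq]
    have hsymm : (∑ i : Fin n, ∑ j : Fin n, if j < i then X i * X j else 0)
        = ∑ i : Fin n, ∑ j : Fin n, if i < j then X i * X j else 0 := by
      rw [Finset.sum_comm]
      apply Finset.sum_congr rfl; intro i _
      apply Finset.sum_congr rfl; intro j _
      by_cases h : i < j <;> simp [h, mul_comm]
    have hsplit : (∑ i : Fin n, ∑ j : Fin n, X i * X j) =
        (∑ i : Fin n, ∑ j : Fin n, if i < j then X i * X j else 0)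
          + (∑ i : Fin n, ∑ j : Fin n, if i = j then X i * X j else 0)
          + (∑ i : Fin n, ∑ j : Fin n, if j < i then X i * X j else 0) := by
      rw [← Finset.sum_add_distrib, ← Finset.sum_add_distrib]
      refine Finset.sum_congr rfl fun i _ => ?_
      rw [← Finset.sum_add_distrib, ← Finset.sum_add_distrib]
      exact Finset.sum_congr rfl fun j _ => expand i j
    have h0 := hsq
    rw [hsum, hsplit, hdiag, hsymm] at h0
    linarith
  -- Q > 0
  have hQpos : 0 < Q := by
    obtain ⟨i, hi⟩ := Function.ne_iff.mp hX
    refine Finset.sum_pos' (fun j _ => sq_nonneg _) ⟨i, Finset.mem_univ i, pow_two_pos_of_ne_zero hi⟩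
  -- Cauchy–Schwarz: T^2 ≤ kr * P
  have hPnonneg : 0 ≤ P := Finset.sum_nonneg fun i _ => sq_nonneg _
  have hcard : ((s.card : ℝ)) ≤ kr := by
    have hle : s.card ≤ k - 1 := by
      have : s.card ≤ (Finset.Ico 1 k).card := by
        refine Finset.card_le_card_of_injOn (fun i => (i : ℕ)) ?_ ?_
        · intro i hi
          simp only [hsdef, Finset.coe_filter, Set.mem_setOf_eq, Finset.mem_filter] at hi
          simp [Finset.mem_Ico, hi.2.1, hi.2.2]
        · intro i _ j _ hij
          exact Fin.ext hij
      simpa [Nat.card_Ico] using this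
    have : ((s.card : ℝ)) ≤ ((k - 1 : ℕ) : ℝ) := by exact_mod_cast hle
    have hk1 : ((k - 1 : ℕ) : ℝ) = (k : ℝ) - 1 := by
      have : 1 ≤ k := by omega
      push_cast [this]; ring
    rw [hk1] at this
    exact this
  have hCS : T ^ 2 ≤ kr * P := by
    have h1 : (∑ i ∈ s, 1 * X i) ^ 2 ≤ (∑ i ∈ s, (1 : ℝ) ^ 2) * ∑ i ∈ s, X i ^ 2 :=
      Finset.sum_mul_sq_le_sq_mul_sq s (fun _ => 1) X
    simp only [one_mul, one_pow, Finset.sum_const, nsmul_eq_mul, mul_one] at h1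
    calc T ^ 2 ≤ (s.card : ℝ) * P := h1
      _ ≤ kr * P := by nlinarith
  -- P + a^2 ≤ Q
  have hsub : P + a ^ 2 ≤ Q := by
    have h0s : (⟨0, by omega⟩ : Fin n) ∉ s := by simp [hsdef]
    have : P + a ^ 2 = ∑ i ∈ insert (⟨0, by omega⟩ : Fin n) s, X i ^ 2 := by
      rw [Finset.sum_insert h0s]; ring
    rw [this, hQdef]
    exact Finset.sum_le_sum_of_subset_of_nonneg (Finset.subset_univ _)
      (fun i _ _ => sq_nonneg _)
  -- rewrite chenF
  have hchen : chenF n k hn X = -Q / 2 - (1 / kr) * a * T := by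
    rw [chenF, hA]
    congr 1
    rw [hTdef, hsdef, Finset.sum_filter]
  rw [hchen]
  -- key positivity
  have hkey : 0 < kr * Q + 2 * a * T := by
    by_cases ha : a = 0
    · rw [ha]
      nlinarith [mul_pos hkr0 hQpos]
    · have ha2 : 0 < a ^ 2 := by positivity
      nlinarith [sq_nonneg (T + a)]
  have heq : -Q / 2 - (1 / kr) * a * T = -((kr * Q + 2 * a * T) / (2 * kr)) := by
    field_simp
    ring
  rw [heq, neg_lt_zero]
  positivity
end

section
/- Let n ≥ 3 and k be integers with 3 ≤ k ≤ n, and let h₁, …, hₙ be real numbers. Suppose the gradient of f at (h₁,…,hₙ) is collinear with (1,1,…,1), i.e., there exists λ ∈ ℝ such that: Σ_{i=2}^{n} hᵢ − (1/(k−1))·Σ_{i=2}^{k} hᵢ = λ; for every j with 2 ≤ j ≤ k, Σ_{i≠j} hᵢ − (1/(k−1))·h₁ = λ; and for every l with k+1 ≤ l ≤ n, Σ_{i≠l} hᵢ = λ. Then h₁ = 0 and h₂ = h₃ = ⋯ = hₙ. -/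
/-!
Coordinates are indexed from 0, so `h₀` is the paper's `h₁`. With `S = ∑ i, h i` and
`c = 1/(k-1)`, the conditions for `1 ≤ j < k` read `S - h j - c h₀ = λ`, so `h j = a` is
constant on that block; the block sum in `∂f/∂h₀` is then `(k-1) a`, giving `S - h₀ - a = λ`.
Comparing with `S - a - c h₀ = λ` yields `(1 - c) h₀ = 0`, and `c < 1` because `k ≥ 3`.
Finally `S - h l = λ` for `l ≥ k` forces `h l = a`.
-/

open Finset

theorem Fintype.sum_ite_ne_eq_sub {ι M : Type*} [Fintype ι] [DecidableEq ι] [AddCommGroup M]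
    (f : ι → M) (j : ι) : (∑ i, if i ≠ j then f i else 0) = ∑ i, f i - f j := by
  rw [← sum_filter, filter_ne', sum_erase_eq_sub (mem_univ j)]

theorem Fin.sum_ite_one_le_eq_sub {n : ℕ} {M : Type*} [AddCommGroup M] (f : Fin n → M)
    (hn : 0 < n) : (∑ i : Fin n, if 1 ≤ (i : ℕ) then f i else 0) = ∑ i, f i - f ⟨0, hn⟩ := by
  rw [← Fintype.sum_ite_ne_eq_sub]
  refine sum_congr rfl fun i _ => if_congr ?_ rfl rfl
  rw [Ne, Fin.ext_iff, Nat.one_le_iff_ne_zero]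

theorem Fin.card_filter_val_mem_Ico {n a b : ℕ} (hb : b ≤ n) :
    #{i : Fin n | a ≤ (i : ℕ) ∧ (i : ℕ) < b} = b - a := by
  rw [← Nat.card_Ico, ← card_attachFin (Ico a b) fun m hm => (mem_Ico.1 hm).2.trans_le hb]
  congr 1
  ext i
  simp

theorem Fin.sum_ite_val_mem_Ico_of_eq {n a b : ℕ} {M : Type*} [AddCommMonoid M] (hb : b ≤ n)
    (f : Fin n → M) (c : M) (hf : ∀ i : Fin n, a ≤ (i : ℕ) → (i : ℕ) < b → f i = c) :
    (∑ i : Fin n, if a ≤ (i : ℕ) ∧ (i : ℕ) < b then f i else 0) = (b - a) • c := by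
  rw [← sum_filter, sum_congr rfl fun i hi => hf i (mem_filter.1 hi).2.1 (mem_filter.1 hi).2.2,
    Finset.sum_const, Fin.card_filter_val_mem_Ico hb]

theorem stmt_4 (n k : ℕ) (hk : 3 ≤ k) (hkn : k ≤ n)
    (h : Fin n → ℝ)
    (lam : ℝ)
    (grad1 : (∑ i : Fin n, if 1 ≤ (i : ℕ) then h i else 0)
        - (1 / ((k : ℝ) - 1)) * (∑ i : Fin n, if 1 ≤ (i : ℕ) ∧ (i : ℕ) < k then h i else 0)
        = lam)
    (gradj : ∀ j : Fin n, 1 ≤ (j : ℕ) → (j : ℕ) < k →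
        (∑ i : Fin n, if i ≠ j then h i else 0) - (1 / ((k : ℝ) - 1)) * h ⟨0, by omega⟩ = lam)
    (gradl : ∀ l : Fin n, k ≤ (l : ℕ) →
        (∑ i : Fin n, if i ≠ l then h i else 0) = lam) :
    h ⟨0, by omega⟩ = 0 ∧
      ∀ i j : Fin n, 1 ≤ (i : ℕ) → 1 ≤ (j : ℕ) → h i = h j := by
  have hk' : (3 : ℝ) ≤ k := by exact_mod_cast hk
  have hc_mul : 1 / ((k : ℝ) - 1) * ((k - 1 : ℕ) : ℝ) = 1 := by
    rw [Nat.cast_sub (by omega), Nat.cast_one, one_div_mul_cancel (by linarith)]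
  have hc1 : 1 / ((k : ℝ) - 1) < 1 := by
    rw [div_lt_one (by linarith)]
    linarith
  set c : ℝ := 1 / ((k : ℝ) - 1)
  set h₀ := h ⟨0, by omega⟩
  set a := h ⟨1, by omega⟩
  simp only [Fintype.sum_ite_ne_eq_sub] at gradj gradl
  have grad_one := gradj ⟨1, by omega⟩ le_rfl (by simp only; omega)
  have block_eq (i : Fin n) (hi : 1 ≤ (i : ℕ)) (hik : (i : ℕ) < k) : h i = a := by
    linarith [gradj i hi hik]
  rw [Fin.sum_ite_one_le_eq_sub h (by omega), Fin.sum_ite_val_mem_Ico_of_eq hkn h a block_eq,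
    nsmul_eq_mul, ← mul_assoc, hc_mul, one_mul] at grad1
  have h₀_eq : h₀ = 0 := by
    have : (1 - c) * h₀ = 0 := by linear_combination grad_one - grad1
    exact (mul_eq_zero.1 this).resolve_left (by linarith)
  have eq_a (i : Fin n) (hi : 1 ≤ (i : ℕ)) : h i = a := by
    rcases lt_or_ge (i : ℕ) k with hik | hik
    · exact block_eq i hi hik
    · linarith [gradl i hik, h₀_eq]
  exact ⟨h₀_eq, fun i j hi hj => (eq_a i hi).trans (eq_a j hj).symm⟩
end

section
/- Let n ≥ 3, 3 ≤ k ≤ n and m ≥ 1 be integers, and for each r ∈ {1,…,m} let (h^r_{ij})_{1≤i,j≤n} be a symmetric real n×n matrix. Then equality Σ_{r=1}^{m} [ Σ_{1≤i<j≤n} ( h^r_{ii}h^r_{jj} − (h^r_{ij})² ) − (1/(k−1)) Σ_{i=2}^{k} ( h^r_{11}h^r_{ii} − (h^r_{1i})² ) ] = ((n−2)/(2(n−1))) · Σ_{r=1}^{m} ( Σ_{i=1}^{n} h^r_{ii} )² holds if and only if for every r there exists a real number a^r such that h^r_{ij} = 0 for all i ≠ j, h^r_{11} = 0, and h^r_{22}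 = h^r_{33} = ⋯ = h^r_{nn} = a^r. -/
open Finset

-- halving lemma
lemma halve {n : ℕ} (g : Fin n → Fin n → ℝ) (hg : ∀ i j, g i j = g j i) :
    ∑ i : Fin n, ∑ j : Fin n, (if i < j then g i j else 0)
      = ((∑ i : Fin n, ∑ j : Fin n, g i j) - ∑ i : Fin n, g i i) / 2 := by
  have h1 : ∑ i : Fin n, ∑ j : Fin n, g i j
      = ∑ i : Fin n, ∑ j : Fin n,
        ((if i < j then g i j else 0) + (if j < i then g i j else 0) + (if i = j then g i j else 0)) := by
    refine sum_congr rfl fun i _ => sum_congr rfl fun j _ => ?_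
    rcases lt_trichotomy i j with h | h | h
    · simp [h, h.ne, h.asymm]
    · simp [h]
    · simp [h, h.ne', h.asymm]
  have h2 : ∑ i : Fin n, ∑ j : Fin n, (if j < i then g i j else 0)
      = ∑ i : Fin n, ∑ j : Fin n, (if i < j then g i j else 0) := by
    rw [Finset.sum_comm]
    exact sum_congr rfl fun i _ => sum_congr rfl fun j _ => by rw [hg]
  have h3 : ∑ i : Fin n, ∑ j : Fin n, (if i = j then g i j else 0) = ∑ i : Fin n, g i i := by
    refine sum_congr rfl fun i _ => ?_
    simp [Finset.sum_ite_eq]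
  simp only [Finset.sum_add_distrib] at h1
  rw [h2, h3] at h1
  linarith

-- card lemma
lemma card_filter_val (n a b : ℕ) (hb : b ≤ n) :
    (univ.filter (fun i : Fin n => a ≤ i.val ∧ i.val < b)).card = b - a := by
  have h1 : (univ.filter (fun i : Fin n => a ≤ i.val ∧ i.val < b)).image Fin.val = Finset.Ico a b := by
    ext x
    simp only [Finset.mem_image, Finset.mem_filter, Finset.mem_univ, true_and, Finset.mem_Ico]
    constructor
    · rintro ⟨i, hi, rfl⟩; exact hi
    · rintro ⟨h1, h2⟩; exact ⟨⟨x, by omega⟩, ⟨h1, h2⟩, rfl⟩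
  have := Finset.card_image_of_injective
    (univ.filter (fun i : Fin n => a ≤ i.val ∧ i.val < b)) (Fin.val_injective)
  rw [h1] at this
  rw [← this, Nat.card_Ico]

lemma sq_pair {α : Type*} [DecidableEq α] (s : Finset α) (d : α → ℝ) :
    ∑ i ∈ s, ∑ j ∈ s, (d i - d j) ^ 2
      = 2 * (s.card * ∑ i ∈ s, d i ^ 2) - 2 * (∑ i ∈ s, d i) ^ 2 := by
  have h1 : ∀ i ∈ s, ∑ j ∈ s, (d i - d j) ^ 2
      = s.card * d i ^ 2 - 2 * d i * (∑ j ∈ s, d j) + ∑ j ∈ s, d j ^ 2 := by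
    intro i _
    have : ∑ j ∈ s, (d i - d j) ^ 2 = ∑ j ∈ s, (d i ^ 2 - 2 * d i * d j + d j ^ 2) :=
      sum_congr rfl fun j _ => by ring
    rw [this, Finset.sum_add_distrib, Finset.sum_sub_distrib, Finset.sum_const, ← Finset.mul_sum,
      nsmul_eq_mul]
  rw [sum_congr rfl h1, Finset.sum_add_distrib, Finset.sum_sub_distrib, Finset.sum_const,
    ← Finset.mul_sum, nsmul_eq_mul]
  have h2 : ∑ i ∈ s, 2 * d i * (∑ j ∈ s, d j) = 2 * ((∑ i ∈ s, d i) * (∑ j ∈ s, d j)) := by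
    have : ∀ i ∈ s, 2 * d i * (∑ j ∈ s, d j) = d i * (2 * ∑ j ∈ s, d j) := fun i _ => by ring
    rw [sum_congr rfl this, ← Finset.sum_mul]
    ring
  rw [h2]
  ring

lemma cross_sum {α : Type*} (A B : Finset α) (d : α → ℝ) :
    ∑ i ∈ A, ∑ j ∈ B, (d i - d j)
      = B.card * ∑ i ∈ A, d i - A.card * ∑ j ∈ B, d j := by
  have h1 : ∀ i ∈ A, ∑ j ∈ B, (d i - d j) = B.card * d i - ∑ j ∈ B, d j := fun i _ => by
    rw [Finset.sum_sub_distrib, Finset.sum_const, nsmul_eq_mul]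
  rw [sum_congr rfl h1, Finset.sum_sub_distrib, Finset.sum_const, ← Finset.mul_sum, nsmul_eq_mul]

lemma double_filter {n : ℕ} (p q : Fin n → Prop) [DecidablePred p] [DecidablePred q]
    (X : Fin n → Fin n → ℝ) :
    ∑ i : Fin n, ∑ j : Fin n, (if p i ∧ q j then X i j else 0)
      = ∑ i ∈ univ.filter p, ∑ j ∈ univ.filter q, X i j := by
  rw [Finset.sum_filter]
  refine sum_congr rfl fun i _ => ?_
  by_cases hp : p i
  · simp only [hp, true_and, if_true, Finset.sum_filter]
  · simp [hp]

lemma key_ident (n k : ℕ) (hn : 3 ≤ n) (hk : 3 ≤ k) (hkn : k ≤ n) (h0 : 0 < n)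
    (f : Fin n → Fin n → ℝ) (hs : ∀ i j, f i j = f j i) :
    ((n:ℝ) - 2) / (2 * ((n:ℝ) - 1)) * (∑ i : Fin n, f i i) ^ 2
      - ((∑ i : Fin n, ∑ j : Fin n, if i < j then f i i * f j j - f i j ^ 2 else 0)
        - 1 / ((k:ℝ) - 1) * (∑ i : Fin n, if 1 ≤ (i:ℕ) ∧ (i:ℕ) < k then
            f ⟨0, h0⟩ ⟨0, h0⟩ * f i i - f ⟨0, h0⟩ i ^ 2 else 0))
    = 1 / (2 * ((n:ℝ) - 1)) * (∑ i : Fin n, ∑ j : Fin n, if 1 ≤ (i:ℕ) ∧ i < j then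
          (f i i - f j j + (if (i:ℕ) < k ∧ k ≤ (j:ℕ) then f ⟨0, h0⟩ ⟨0, h0⟩ / ((k:ℝ) - 1) else 0)) ^ 2 else 0)
      + ((k:ℝ) - 2) / (2 * ((k:ℝ) - 1)) * f ⟨0, h0⟩ ⟨0, h0⟩ ^ 2
      + ∑ i : Fin n, ∑ j : Fin n, (if i < j then
          (if (i:ℕ) = 0 ∧ (j:ℕ) < k then ((k:ℝ) - 2) / ((k:ℝ) - 1) else 1) * f i j ^ 2 else 0) := by
  have hν : ((n:ℝ)) - 1 ≠ 0 := by
    have : (3:ℝ) ≤ (n:ℝ) := by exact_mod_cast hn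
    intro hc; linarith
  have hκ : ((k:ℝ)) - 1 ≠ 0 := by
    have : (3:ℝ) ≤ (k:ℝ) := by exact_mod_cast hk
    intro hc; linarith
  set z : Fin n := ⟨0, h0⟩ with hz
  set A : Finset (Fin n) := univ.filter (fun i => 1 ≤ i.val ∧ i.val < k) with hA
  set B : Finset (Fin n) := univ.filter (fun i => k ≤ i.val ∧ i.val < n) with hB
  set I : Finset (Fin n) := univ.filter (fun i => 1 ≤ i.val ∧ i.val < n) with hI
  have cA : ((A.card : ℝ)) = (k:ℝ) - 1 := by
    rw [hA, card_filter_val n 1 k hkn, Nat.cast_sub (by omega), Nat.cast_one]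
  have cB : ((B.card : ℝ)) = (n:ℝ) - (k:ℝ) := by
    rw [hB, card_filter_val n k n le_rfl, Nat.cast_sub (by omega)]
  have cI : ((I.card : ℝ)) = (n:ℝ) - 1 := by
    rw [hI, card_filter_val n 1 n le_rfl, Nat.cast_sub (by omega), Nat.cast_one]
  set d0 : ℝ := f z z with hd0
  set S : ℝ := ∑ i ∈ A, f i i with hS
  set T : ℝ := ∑ i ∈ B, f i i with hT
  set q : ℝ := ∑ i ∈ I, f i i ^ 2 with hq
  set P : ℝ := ∑ i : Fin n, ∑ j : Fin n, (if i < j then f i j ^ 2 else 0) with hP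
  set W : ℝ := ∑ i ∈ A, f z i ^ 2 with hW
  -- splitting of univ into {z} and I
  have split0 : ∀ g : Fin n → ℝ, ∑ i : Fin n, g i = g z + ∑ i ∈ I, g i := by
    intro g
    rw [← Finset.sum_filter_add_sum_filter_not univ (fun i : Fin n => 1 ≤ i.val ∧ i.val < n)]
    have h1 : univ.filter (fun i : Fin n => ¬(1 ≤ i.val ∧ i.val < n)) = {z} := by
      ext i
      simp only [Finset.mem_filter, Finset.mem_univ, true_and, Finset.mem_singleton,
        Fin.ext_iff, hz]
      have := i.isLt
      omega
    rw [h1, Finset.sum_singleton, ← hI]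
    ring
  -- splitting of I into A and B
  have splitI : ∀ g : Fin n → ℝ, ∑ i ∈ I, g i = ∑ i ∈ A, g i + ∑ i ∈ B, g i := by
    intro g
    rw [← Finset.sum_filter_add_sum_filter_not I (fun i : Fin n => i.val < k)]
    congr 1
    · apply Finset.sum_congr _ fun _ _ => rfl
      rw [hI, hA, Finset.filter_filter]
      apply Finset.filter_congr
      intro i _
      have := i.isLt
      omega
    · apply Finset.sum_congr _ fun _ _ => rfl
      rw [hI, hB, Finset.filter_filter]
      apply Finset.filter_congr
      intro i _
      omega
  have trace : ∑ i : Fin n, f i i = d0 + (S + T) := by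
    rw [split0 (fun i => f i i), splitI (fun i => f i i)]
  have trsq : ∑ i : Fin n, f i i ^ 2 = d0 ^ 2 + q := by
    rw [split0 (fun i => f i i ^ 2)]
  -- T3 : main sum
  have T3 : (∑ i : Fin n, ∑ j : Fin n, if i < j then f i i * f j j - f i j ^ 2 else 0)
      = (((d0 + (S + T)) ^ 2 - (d0 ^ 2 + q)) / 2) - P := by
    have e1 : (∑ i : Fin n, ∑ j : Fin n, if i < j then f i i * f j j - f i j ^ 2 else 0)
        = (∑ i : Fin n, ∑ j : Fin n, if i < j then f i i * f j j else 0) - P := by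
      rw [hP, ← Finset.sum_sub_distrib]
      refine sum_congr rfl fun i _ => ?_
      rw [← Finset.sum_sub_distrib]
      refine sum_congr rfl fun j _ => ?_
      split_ifs <;> ring
    rw [e1, halve (fun i j => f i i * f j j) (fun i j => by ring)]
    have e2 : ∑ i : Fin n, ∑ j : Fin n, f i i * f j j = (∑ i : Fin n, f i i) ^ 2 := by
      rw [sq, Finset.sum_mul_sum]
    have e3 : ∑ i : Fin n, f i i * f i i = ∑ i : Fin n, f i i ^ 2 :=
      sum_congr rfl fun i _ => by ring
    rw [e2, e3, trace, trsq]
  -- T4 : correction sum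
  have T4 : (∑ i : Fin n, if 1 ≤ (i:ℕ) ∧ (i:ℕ) < k then
        f z z * f i i - f z i ^ 2 else 0) = d0 * S - W := by
    have e1 : (∑ i : Fin n, if 1 ≤ (i:ℕ) ∧ (i:ℕ) < k then
          f z z * f i i - f z i ^ 2 else 0)
        = ∑ i ∈ A, (f z z * f i i - f z i ^ 2) := by
      rw [hA, Finset.sum_filter]
    rw [e1, Finset.sum_sub_distrib, ← Finset.mul_sum, ← hS, ← hW, ← hd0]
  -- T5 : SOS diagonal sum
  have T5 : (∑ i : Fin n, ∑ j : Fin n, if 1 ≤ (i:ℕ) ∧ i < j then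
        (f i i - f j j + (if (i:ℕ) < k ∧ k ≤ (j:ℕ) then d0 / ((k:ℝ) - 1) else 0)) ^ 2 else 0)
      = ((2 * ((((n:ℝ)) - 1) * q) - 2 * (S + T) ^ 2) - 0) / 2
        + (2 * (d0 / ((k:ℝ) - 1))) * ((((n:ℝ)) - ((k:ℝ))) * S - (((k:ℝ)) - 1) * T)
        + ((((k:ℝ)) - 1) * ((((n:ℝ)) - ((k:ℝ))) * (d0 / ((k:ℝ) - 1)) ^ 2)) := by
    have expand : ∀ i j : Fin n, (if 1 ≤ (i:ℕ) ∧ i < j then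
          (f i i - f j j + (if (i:ℕ) < k ∧ k ≤ (j:ℕ) then d0 / ((k:ℝ) - 1) else 0)) ^ 2 else 0)
        = (if i < j then (if (1 ≤ (i:ℕ) ∧ (i:ℕ) < n) ∧ (1 ≤ (j:ℕ) ∧ (j:ℕ) < n) then
              (f i i - f j j) ^ 2 else 0) else 0)
          + ((if (1 ≤ (i:ℕ) ∧ (i:ℕ) < k) ∧ (k ≤ (j:ℕ) ∧ (j:ℕ) < n) then
              2 * (f i i - f j j) * (d0 / ((k:ℝ) - 1)) else 0)
          + (if (1 ≤ (i:ℕ) ∧ (i:ℕ) < k) ∧ (k ≤ (j:ℕ) ∧ (j:ℕ) < n) then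
              (d0 / ((k:ℝ) - 1)) ^ 2 else 0)) := by
      intro i j
      have hi := i.isLt
      have hj := j.isLt
      simp only [Fin.lt_def]
      split_ifs <;> first | ring1 | (exfalso; omega)
    calc (∑ i : Fin n, ∑ j : Fin n, if 1 ≤ (i:ℕ) ∧ i < j then
          (f i i - f j j + (if (i:ℕ) < k ∧ k ≤ (j:ℕ) then d0 / ((k:ℝ) - 1) else 0)) ^ 2 else 0)
        = ∑ i : Fin n, ∑ j : Fin n,
            ((if i < j then (if (1 ≤ (i:ℕ) ∧ (i:ℕ) < n) ∧ (1 ≤ (j:ℕ) ∧ (j:ℕ) < n) then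
                (f i i - f j j) ^ 2 else 0) else 0)
            + ((if (1 ≤ (i:ℕ) ∧ (i:ℕ) < k) ∧ (k ≤ (j:ℕ) ∧ (j:ℕ) < n) then
                2 * (f i i - f j j) * (d0 / ((k:ℝ) - 1)) else 0)
            + (if (1 ≤ (i:ℕ) ∧ (i:ℕ) < k) ∧ (k ≤ (j:ℕ) ∧ (j:ℕ) < n) then
                (d0 / ((k:ℝ) - 1)) ^ 2 else 0))) :=
          sum_congr rfl fun i _ => sum_congr rfl fun j _ => expand i j
      _ = _ := by
          simp only [Finset.sum_add_distrib]
          have G1 : (∑ i : Fin n, ∑ j : Fin n, (if i < j then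
                (if (1 ≤ (i:ℕ) ∧ (i:ℕ) < n) ∧ (1 ≤ (j:ℕ) ∧ (j:ℕ) < n) then
                  (f i i - f j j) ^ 2 else 0) else 0))
              = ((2 * ((((n:ℝ)) - 1) * q) - 2 * (S + T) ^ 2) - 0) / 2 := by
            rw [halve (fun i j => (if (1 ≤ (i:ℕ) ∧ (i:ℕ) < n) ∧ (1 ≤ (j:ℕ) ∧ (j:ℕ) < n) then
                (f i i - f j j) ^ 2 else 0))
              (fun i j => by split_ifs <;> first | ring1 | (exfalso; tauto))]
            have hdiag : (∑ i : Fin n, (if (1 ≤ (i:ℕ) ∧ (i:ℕ) < n) ∧ (1 ≤ (i:ℕ) ∧ (i:ℕ) < n) then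
                (f i i - f i i) ^ 2 else 0)) = 0 := by simp
            rw [hdiag, double_filter (fun i : Fin n => 1 ≤ i.val ∧ i.val < n)
                (fun j : Fin n => 1 ≤ j.val ∧ j.val < n) (fun i j => (f i i - f j j) ^ 2), ← hI,
              sq_pair I (fun i => f i i), cI, ← hq, splitI (fun i => f i i), ← hS, ← hT]
          have G2 : (∑ i : Fin n, ∑ j : Fin n, (if (1 ≤ (i:ℕ) ∧ (i:ℕ) < k) ∧ (k ≤ (j:ℕ) ∧ (j:ℕ) < n) then
                2 * (f i i - f j j) * (d0 / ((k:ℝ) - 1)) else 0))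
              = (2 * (d0 / ((k:ℝ) - 1))) * ((((n:ℝ)) - ((k:ℝ))) * S - (((k:ℝ)) - 1) * T) := by
            rw [double_filter (fun i : Fin n => 1 ≤ i.val ∧ i.val < k)
                (fun j : Fin n => k ≤ j.val ∧ j.val < n)
                (fun i j => 2 * (f i i - f j j) * (d0 / ((k:ℝ) - 1))), ← hA, ← hB]
            have e : ∀ i ∈ A, ∑ j ∈ B, 2 * (f i i - f j j) * (d0 / ((k:ℝ) - 1))
                = (2 * (d0 / ((k:ℝ) - 1))) * ∑ j ∈ B, (f i i - f j j) := by
              intro i _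
              rw [Finset.mul_sum]
              exact sum_congr rfl fun j _ => by ring
            rw [sum_congr rfl e, ← Finset.mul_sum, cross_sum A B (fun i => f i i), ← hS, ← hT,
              cA, cB]
          have G3 : (∑ i : Fin n, ∑ j : Fin n, (if (1 ≤ (i:ℕ) ∧ (i:ℕ) < k) ∧ (k ≤ (j:ℕ) ∧ (j:ℕ) < n) then
                (d0 / ((k:ℝ) - 1)) ^ 2 else 0))
              = (((k:ℝ)) - 1) * ((((n:ℝ)) - ((k:ℝ))) * (d0 / ((k:ℝ) - 1)) ^ 2) := by
            rw [double_filter (fun i : Fin n => 1 ≤ i.val ∧ i.val < k)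
                (fun j : Fin n => k ≤ j.val ∧ j.val < n)
                (fun _ _ => (d0 / ((k:ℝ) - 1)) ^ 2), ← hA, ← hB]
            rw [Finset.sum_const, Finset.sum_const, nsmul_eq_mul, nsmul_eq_mul, cA, cB]
          rw [G1, G2, G3]
          ring
  -- T6 : off-diagonal SOS sum
  have T6 : (∑ i : Fin n, ∑ j : Fin n, (if i < j then
        (if (i:ℕ) = 0 ∧ (j:ℕ) < k then ((k:ℝ) - 2) / ((k:ℝ) - 1) else 1) * f i j ^ 2 else 0))
      = P - 1 / ((k:ℝ) - 1) * W := by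
    have expand : ∀ i j : Fin n, (if i < j then
          (if (i:ℕ) = 0 ∧ (j:ℕ) < k then ((k:ℝ) - 2) / ((k:ℝ) - 1) else 1) * f i j ^ 2 else 0)
        = (if i < j then f i j ^ 2 else 0)
          - 1 / ((k:ℝ) - 1) * (if ((i:ℕ) = 0) ∧ (1 ≤ (j:ℕ) ∧ (j:ℕ) < k) then f i j ^ 2 else 0) := by
      intro i j
      have hi := i.isLt
      have hj := j.isLt
      simp only [Fin.lt_def]
      split_ifs <;> first | ring1 | (exfalso; omega) | (field_simp; ring1)
    calc (∑ i : Fin n, ∑ j : Fin n, (if i < j then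
          (if (i:ℕ) = 0 ∧ (j:ℕ) < k then ((k:ℝ) - 2) / ((k:ℝ) - 1) else 1) * f i j ^ 2 else 0))
        = ∑ i : Fin n, ∑ j : Fin n, ((if i < j then f i j ^ 2 else 0)
            - 1 / ((k:ℝ) - 1) * (if ((i:ℕ) = 0) ∧ (1 ≤ (j:ℕ) ∧ (j:ℕ) < k) then f i j ^ 2 else 0)) :=
          sum_congr rfl fun i _ => sum_congr rfl fun j _ => expand i j
      _ = P - 1 / ((k:ℝ) - 1) * W := by
          simp only [Finset.sum_sub_distrib, ← Finset.mul_sum]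
          have hZ : (∑ i : Fin n, ∑ j : Fin n, (if ((i:ℕ) = 0) ∧ (1 ≤ (j:ℕ) ∧ (j:ℕ) < k) then
                f i j ^ 2 else 0)) = W := by
            rw [double_filter (fun i : Fin n => i.val = 0)
                (fun j : Fin n => 1 ≤ j.val ∧ j.val < k) (fun i j => f i j ^ 2), ← hA]
            have h1 : univ.filter (fun i : Fin n => i.val = 0) = {z} := by
              ext i
              simp [Fin.ext_iff, hz]
            rw [h1, Finset.sum_singleton, ← hW]
          rw [← hP, hZ]
  rw [T3, T4, T5, T6, trace]
  field_simp
  ring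

lemma sos_nonneg (n k : ℕ) (hn : 3 ≤ n) (hk : 3 ≤ k) (hkn : k ≤ n) (h0 : 0 < n)
    (f : Fin n → Fin n → ℝ) :
    0 ≤ 1 / (2 * ((n:ℝ) - 1)) * (∑ i : Fin n, ∑ j : Fin n, if 1 ≤ (i:ℕ) ∧ i < j then
          (f i i - f j j + (if (i:ℕ) < k ∧ k ≤ (j:ℕ) then f ⟨0, h0⟩ ⟨0, h0⟩ / ((k:ℝ) - 1) else 0)) ^ 2 else 0)
      + ((k:ℝ) - 2) / (2 * ((k:ℝ) - 1)) * f ⟨0, h0⟩ ⟨0, h0⟩ ^ 2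
      + ∑ i : Fin n, ∑ j : Fin n, (if i < j then
          (if (i:ℕ) = 0 ∧ (j:ℕ) < k then ((k:ℝ) - 2) / ((k:ℝ) - 1) else 1) * f i j ^ 2 else 0) := by
  have hν : (0:ℝ) < (n:ℝ) - 1 := by
    have : (3:ℝ) ≤ (n:ℝ) := by exact_mod_cast hn
    linarith
  have hκ : (0:ℝ) < (k:ℝ) - 1 := by
    have : (3:ℝ) ≤ (k:ℝ) := by exact_mod_cast hk
    linarith
  have hκ2 : (0:ℝ) ≤ (k:ℝ) - 2 := by
    have : (3:ℝ) ≤ (k:ℝ) := by exact_mod_cast hk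
    linarith
  have p1 : 0 ≤ (∑ i : Fin n, ∑ j : Fin n, if 1 ≤ (i:ℕ) ∧ i < j then
      (f i i - f j j + (if (i:ℕ) < k ∧ k ≤ (j:ℕ) then f ⟨0, h0⟩ ⟨0, h0⟩ / ((k:ℝ) - 1) else 0)) ^ 2 else 0) := by
    refine Finset.sum_nonneg fun i _ => Finset.sum_nonneg fun j _ => ?_
    split_ifs <;> positivity
  have p3 : 0 ≤ ∑ i : Fin n, ∑ j : Fin n, (if i < j then
      (if (i:ℕ) = 0 ∧ (j:ℕ) < k then ((k:ℝ) - 2) / ((k:ℝ) - 1) else 1) * f i j ^ 2 else 0) := by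
    refine Finset.sum_nonneg fun i _ => Finset.sum_nonneg fun j _ => ?_
    split_ifs with hc hc2
    · exact mul_nonneg (div_nonneg hκ2 (by linarith)) (sq_nonneg _)
    · exact mul_nonneg (by norm_num) (sq_nonneg _)
    · exact le_refl 0
  have c1 : 0 ≤ 1 / (2 * ((n:ℝ) - 1)) := by positivity
  have c2 : 0 ≤ ((k:ℝ) - 2) / (2 * ((k:ℝ) - 1)) := div_nonneg hκ2 (by linarith)
  have := mul_nonneg c1 p1
  have := mul_nonneg c2 (sq_nonneg (f ⟨0, h0⟩ ⟨0, h0⟩))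
  linarith

lemma sos_zero_iff (n k : ℕ) (hn : 3 ≤ n) (hk : 3 ≤ k) (hkn : k ≤ n) (h0 : 0 < n)
    (f : Fin n → Fin n → ℝ) (hs : ∀ i j, f i j = f j i) :
    (1 / (2 * ((n:ℝ) - 1)) * (∑ i : Fin n, ∑ j : Fin n, if 1 ≤ (i:ℕ) ∧ i < j then
          (f i i - f j j + (if (i:ℕ) < k ∧ k ≤ (j:ℕ) then f ⟨0, h0⟩ ⟨0, h0⟩ / ((k:ℝ) - 1) else 0)) ^ 2 else 0)
      + ((k:ℝ) - 2) / (2 * ((k:ℝ) - 1)) * f ⟨0, h0⟩ ⟨0, h0⟩ ^ 2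
      + ∑ i : Fin n, ∑ j : Fin n, (if i < j then
          (if (i:ℕ) = 0 ∧ (j:ℕ) < k then ((k:ℝ) - 2) / ((k:ℝ) - 1) else 1) * f i j ^ 2 else 0) = 0)
    ↔ ∃ a : ℝ,
        (∀ i j : Fin n, i ≠ j → f i j = 0) ∧
        f ⟨0, h0⟩ ⟨0, h0⟩ = 0 ∧
        (∀ i : Fin n, 1 ≤ (i : ℕ) → f i i = a) := by
  have hν : (0:ℝ) < (n:ℝ) - 1 := by
    have : (3:ℝ) ≤ (n:ℝ) := by exact_mod_cast hn
    linarith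
  have hκ : (0:ℝ) < (k:ℝ) - 1 := by
    have : (3:ℝ) ≤ (k:ℝ) := by exact_mod_cast hk
    linarith
  have hκ2 : (0:ℝ) < (k:ℝ) - 2 := by
    have : (3:ℝ) ≤ (k:ℝ) := by exact_mod_cast hk
    linarith
  constructor
  · intro hsum
    -- the three parts are nonneg
    have p1 : 0 ≤ (∑ i : Fin n, ∑ j : Fin n, if 1 ≤ (i:ℕ) ∧ i < j then
        (f i i - f j j + (if (i:ℕ) < k ∧ k ≤ (j:ℕ) then f ⟨0, h0⟩ ⟨0, h0⟩ / ((k:ℝ) - 1) else 0)) ^ 2 else 0) := by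
      refine Finset.sum_nonneg fun i _ => Finset.sum_nonneg fun j _ => ?_
      split_ifs <;> positivity
    have p3 : 0 ≤ ∑ i : Fin n, ∑ j : Fin n, (if i < j then
        (if (i:ℕ) = 0 ∧ (j:ℕ) < k then ((k:ℝ) - 2) / ((k:ℝ) - 1) else 1) * f i j ^ 2 else 0) := by
      refine Finset.sum_nonneg fun i _ => Finset.sum_nonneg fun j _ => ?_
      split_ifs
      · exact mul_nonneg (div_nonneg (by linarith) (by linarith)) (sq_nonneg _)
      · exact mul_nonneg (by norm_num) (sq_nonneg _)
      · exact le_refl 0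
    have c1 : 0 < 1 / (2 * ((n:ℝ) - 1)) := by positivity
    have c2 : 0 < ((k:ℝ) - 2) / (2 * ((k:ℝ) - 1)) := div_pos hκ2 (by linarith)
    have q2 : 0 ≤ f ⟨0, h0⟩ ⟨0, h0⟩ ^ 2 := sq_nonneg _
    -- each part is zero
    have hX := mul_nonneg c1.le p1
    have hY := mul_nonneg c2.le q2
    have eX : 1 / (2 * ((n:ℝ) - 1)) * (∑ i : Fin n, ∑ j : Fin n, if 1 ≤ (i:ℕ) ∧ i < j then
        (f i i - f j j + (if (i:ℕ) < k ∧ k ≤ (j:ℕ) then f ⟨0, h0⟩ ⟨0, h0⟩ / ((k:ℝ) - 1) else 0)) ^ 2 else 0) = 0 := by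
      linarith
    have eY : ((k:ℝ) - 2) / (2 * ((k:ℝ) - 1)) * f ⟨0, h0⟩ ⟨0, h0⟩ ^ 2 = 0 := by linarith
    have z3 : (∑ i : Fin n, ∑ j : Fin n, (if i < j then
        (if (i:ℕ) = 0 ∧ (j:ℕ) < k then ((k:ℝ) - 2) / ((k:ℝ) - 1) else 1) * f i j ^ 2 else 0)) = 0 := by
      linarith
    have z2 : f ⟨0, h0⟩ ⟨0, h0⟩ = 0 := by
      have := (mul_eq_zero.mp eY).resolve_left (ne_of_gt c2)
      exact pow_eq_zero_iff (by norm_num) |>.mp this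
    have z1 : (∑ i : Fin n, ∑ j : Fin n, if 1 ≤ (i:ℕ) ∧ i < j then
        (f i i - f j j + (if (i:ℕ) < k ∧ k ≤ (j:ℕ) then f ⟨0, h0⟩ ⟨0, h0⟩ / ((k:ℝ) - 1) else 0)) ^ 2 else 0) = 0 :=
      (mul_eq_zero.mp eX).resolve_left (ne_of_gt c1)
    -- extract termwise zero from z1
    have t1 : ∀ i j : Fin n, (if 1 ≤ (i:ℕ) ∧ i < j then
        (f i i - f j j + (if (i:ℕ) < k ∧ k ≤ (j:ℕ) then f ⟨0, h0⟩ ⟨0, h0⟩ / ((k:ℝ) - 1) else 0)) ^ 2 else 0) = 0 := by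
      intro i j
      have hin := (Finset.sum_eq_zero_iff_of_nonneg (fun i _ => Finset.sum_nonneg fun j _ => by
        split_ifs <;> positivity)).mp z1 i (Finset.mem_univ i)
      exact (Finset.sum_eq_zero_iff_of_nonneg (fun j _ => by
        split_ifs <;> positivity)).mp hin j (Finset.mem_univ j)
    have t3 : ∀ i j : Fin n, (if i < j then
        (if (i:ℕ) = 0 ∧ (j:ℕ) < k then ((k:ℝ) - 2) / ((k:ℝ) - 1) else 1) * f i j ^ 2 else 0) = 0 := by
      intro i j
      have hin := (Finset.sum_eq_zero_iff_of_nonneg (fun i _ => Finset.sum_nonneg fun j _ => by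
        split_ifs
        · exact mul_nonneg (div_nonneg (by linarith) (by linarith)) (sq_nonneg _)
        · exact mul_nonneg (by norm_num) (sq_nonneg _)
        · exact le_refl 0)).mp z3 i (Finset.mem_univ i)
      exact (Finset.sum_eq_zero_iff_of_nonneg (fun j _ => by
        split_ifs
        · exact mul_nonneg (div_nonneg (by linarith) (by linarith)) (sq_nonneg _)
        · exact mul_nonneg (by norm_num) (sq_nonneg _)
        · exact le_refl 0)).mp hin j (Finset.mem_univ j)
    -- off-diagonal vanishing
    have hoff : ∀ i j : Fin n, i ≠ j → f i j = 0 := by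
      have hlt : ∀ i j : Fin n, i < j → f i j = 0 := by
        intro i j hij
        have := t3 i j
        rw [if_pos hij] at this
        rcases mul_eq_zero.mp this with hc | hc
        · exfalso
          split_ifs at hc
          · rw [div_eq_zero_iff] at hc
            rcases hc with hc | hc <;> linarith
          · linarith
        · exact pow_eq_zero_iff (by norm_num) |>.mp hc
      intro i j hij
      rcases lt_or_gt_of_ne hij with hlt' | hlt'
      · exact hlt i j hlt'
      · rw [hs]; exact hlt j i hlt'
    -- diagonal equality
    have hdiagEq : ∀ i j : Fin n, 1 ≤ (i:ℕ) → i < j → f i i = f j j := by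
      intro i j h1 h2
      have := t1 i j
      rw [if_pos ⟨h1, h2⟩] at this
      have hb := pow_eq_zero_iff (n := 2) (by norm_num) |>.mp this
      have hc : (if (i:ℕ) < k ∧ k ≤ (j:ℕ) then f ⟨0, h0⟩ ⟨0, h0⟩ / ((k:ℝ) - 1) else 0) = 0 := by
        split_ifs
        · rw [z2]; exact zero_div _
        · rfl
      rw [hc] at hb
      linarith
    have h1n : 1 < n := by omega
    refine ⟨f ⟨1, h1n⟩ ⟨1, h1n⟩, hoff, z2, ?_⟩
    intro i hi
    rcases Nat.lt_or_ge 1 (i:ℕ) with hgt | hle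
    · exact (hdiagEq ⟨1, h1n⟩ i (by simp) (by simpa [Fin.lt_def] using hgt)).symm
    · have : i = ⟨1, h1n⟩ := by
        apply Fin.ext
        simp only []
        omega
      rw [this]
  · rintro ⟨a, hoff, h00, hdiag⟩
    have z1 : (∑ i : Fin n, ∑ j : Fin n, if 1 ≤ (i:ℕ) ∧ i < j then
        (f i i - f j j + (if (i:ℕ) < k ∧ k ≤ (j:ℕ) then f ⟨0, h0⟩ ⟨0, h0⟩ / ((k:ℝ) - 1) else 0)) ^ 2 else 0) = 0 := by
      refine Finset.sum_eq_zero fun i _ => Finset.sum_eq_zero fun j _ => ?_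
      split_ifs with hc hc2
      · obtain ⟨hi1, hij⟩ := hc
        have hj1 : 1 ≤ (j:ℕ) := by
          have := Fin.lt_def.mp hij
          omega
        rw [hdiag i hi1, hdiag j hj1, h00, zero_div]
        ring
      · obtain ⟨hi1, hij⟩ := hc
        have hj1 : 1 ≤ (j:ℕ) := by
          have := Fin.lt_def.mp hij
          omega
        rw [hdiag i hi1, hdiag j hj1]
        ring
      · rfl
    have z3 : (∑ i : Fin n, ∑ j : Fin n, (if i < j then
        (if (i:ℕ) = 0 ∧ (j:ℕ) < k then ((k:ℝ) - 2) / ((k:ℝ) - 1) else 1) * f i j ^ 2 else 0)) = 0 := by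
      refine Finset.sum_eq_zero fun i _ => Finset.sum_eq_zero fun j _ => ?_
      split_ifs with hc
      · rw [hoff i j (ne_of_lt hc)]
        ring
      · rw [hoff i j (ne_of_lt hc)]
        ring
      · rfl
    rw [z1, z3, h00]
    ring

theorem stmt_6 (n k m : ℕ) (hn : 3 ≤ n) (hk : 3 ≤ k) (hkn : k ≤ n) (hm : 1 ≤ m)
    (h : Fin m → Fin n → Fin n → ℝ)
    (hsymm : ∀ r i j, h r i j = h r j i) :
    (∑ r : Fin m,
        ((∑ i : Fin n, ∑ j : Fin n, if i < j then h r i i * h r j j - (h r i j) ^ 2 else 0)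
          - (1 / ((k : ℝ) - 1)) *
            (∑ i : Fin n, if 1 ≤ (i : ℕ) ∧ (i : ℕ) < k then
                h r ⟨0, by omega⟩ ⟨0, by omega⟩ * h r i i - (h r ⟨0, by omega⟩ i) ^ 2
              else 0))
      = ((n : ℝ) - 2) / (2 * ((n : ℝ) - 1)) * ∑ r : Fin m, (∑ i : Fin n, h r i i) ^ 2)
    ↔ ∀ r : Fin m, ∃ a : ℝ,
        (∀ i j : Fin n, i ≠ j → h r i j = 0) ∧
        h r ⟨0, by omega⟩ ⟨0, by omega⟩ = 0 ∧
        (∀ i : Fin n, 1 ≤ (i : ℕ) → h r i i = a) := by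

  have h0 : 0 < n := by omega
  have key := fun r : Fin m => key_ident n k hn hk hkn h0 (h r) (hsymm r)
  set SOS : Fin m → ℝ := fun r =>
    1 / (2 * ((n:ℝ) - 1)) * (∑ i : Fin n, ∑ j : Fin n, if 1 ≤ (i:ℕ) ∧ i < j then
          (h r i i - h r j j + (if (i:ℕ) < k ∧ k ≤ (j:ℕ) then h r ⟨0, h0⟩ ⟨0, h0⟩ / ((k:ℝ) - 1) else 0)) ^ 2 else 0)
      + ((k:ℝ) - 2) / (2 * ((k:ℝ) - 1)) * h r ⟨0, h0⟩ ⟨0, h0⟩ ^ 2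
      + ∑ i : Fin n, ∑ j : Fin n, (if i < j then
          (if (i:ℕ) = 0 ∧ (j:ℕ) < k then ((k:ℝ) - 2) / ((k:ℝ) - 1) else 1) * h r i j ^ 2 else 0) with hSOS
  have hiff : (∑ r : Fin m,
        ((∑ i : Fin n, ∑ j : Fin n, if i < j then h r i i * h r j j - (h r i j) ^ 2 else 0)
          - (1 / ((k : ℝ) - 1)) *
            (∑ i : Fin n, if 1 ≤ (i : ℕ) ∧ (i : ℕ) < k then
                h r ⟨0, h0⟩ ⟨0, h0⟩ * h r i i - (h r ⟨0, h0⟩ i) ^ 2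
              else 0))
      = ((n : ℝ) - 2) / (2 * ((n : ℝ) - 1)) * ∑ r : Fin m, (∑ i : Fin n, h r i i) ^ 2)
      ↔ ∑ r : Fin m, SOS r = 0 := by
    have e2 : ∑ r : Fin m, (((n:ℝ) - 2) / (2 * ((n:ℝ) - 1)) * (∑ i : Fin n, h r i i) ^ 2
        - ((∑ i : Fin n, ∑ j : Fin n, if i < j then h r i i * h r j j - (h r i j) ^ 2 else 0)
          - (1 / ((k : ℝ) - 1)) *
            (∑ i : Fin n, if 1 ≤ (i : ℕ) ∧ (i : ℕ) < k then
                h r ⟨0, h0⟩ ⟨0, h0⟩ * h r i i - (h r ⟨0, h0⟩ i) ^ 2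
              else 0))) = ∑ r : Fin m, SOS r :=
      Finset.sum_congr rfl fun r _ => key r
    have e3 : ∑ r : Fin m, (((n:ℝ) - 2) / (2 * ((n:ℝ) - 1)) * (∑ i : Fin n, h r i i) ^ 2
        - ((∑ i : Fin n, ∑ j : Fin n, if i < j then h r i i * h r j j - (h r i j) ^ 2 else 0)
          - (1 / ((k : ℝ) - 1)) *
            (∑ i : Fin n, if 1 ≤ (i : ℕ) ∧ (i : ℕ) < k then
                h r ⟨0, h0⟩ ⟨0, h0⟩ * h r i i - (h r ⟨0, h0⟩ i) ^ 2
              else 0)))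
        = ((n:ℝ) - 2) / (2 * ((n:ℝ) - 1)) * (∑ r : Fin m, (∑ i : Fin n, h r i i) ^ 2)
          - ∑ r : Fin m, ((∑ i : Fin n, ∑ j : Fin n, if i < j then h r i i * h r j j - (h r i j) ^ 2 else 0)
          - (1 / ((k : ℝ) - 1)) *
            (∑ i : Fin n, if 1 ≤ (i : ℕ) ∧ (i : ℕ) < k then
                h r ⟨0, h0⟩ ⟨0, h0⟩ * h r i i - (h r ⟨0, h0⟩ i) ^ 2
              else 0)) := by
      rw [Finset.sum_sub_distrib, ← Finset.mul_sum]
    rw [← e2, e3, sub_eq_zero]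
    exact eq_comm
  constructor
  · intro hE r
    have hz : ∀ r' : Fin m, SOS r' = 0 := by
      have hsum : ∑ r : Fin m, SOS r = 0 := hiff.mp hE
      intro r'
      exact (Finset.sum_eq_zero_iff_of_nonneg
        (fun r _ => sos_nonneg n k hn hk hkn h0 (h r))).mp hsum r' (Finset.mem_univ r')
    exact (sos_zero_iff n k hn hk hkn h0 (h r) (hsymm r)).mp (hz r)
  · intro hcond
    refine hiff.mpr (Finset.sum_eq_zero fun r _ =>
      (sos_zero_iff n k hn hk hkn h0 (h r) (hsymm r)).mpr (hcond r))
end
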